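/- Let (X, ≤) be a finite poset such that no connected component of X is a single point (equivalently, every x ∈ X is comparable with some y ≠ x). Let K be the K-complex of the relation ≤ and K' the K-complex of the strict relation <, i.e., K' consists of the nonempty finite subsets s of X such that there exists y ∈ X with x < y for all x ∈ s. Then K simplicially collapses to K'. -/

import Mathlib

/-- An elementary simplicial collapse: there are simplices `σ ⊊ σ'` in `T` such that `σ'` is
the unique simplex of `T` properly containing `σ`, and `M = T \ {σ, σ'}`. -/
def ElemCollapse {X : Type} (T M : Set (Finset X)) : Prop :=
  ∃ σ σ' : Finset X, σ ∈ T ∧ σ' ∈ T ∧ σ ⊂ σ' ∧ (∀ τ ∈ T, σ ⊂ τ → τ = σ') ∧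
    M = T \ {σ, σ'}

/-!
The simplices of the K-complex of `≤` that are not in the K-complex of `<` are exactly those
whose greatest element `m` is maximal in `X`. Since `m` is not an isolated point, we may fix
`a m < m`; then `σ ↦ σ ∪ {a m}` (for `a m ∉ σ`) is a perfect matching of these extra simplices.
Removing the matched pairs one at a time, always taking a pair whose smaller simplex is
inclusion-maximal among those left, makes every removal an elementary collapse.
-/

open Relation

lemma sdiff_pair_sdiff_erase_union_image {α : Type*} [DecidableEq α] (T : Set α) (f : α → α)
    {P : Finset α} {σ : α} (hσ : σ ∈ P) :
    (T \ {σ, f σ}) \ (↑(P.erase σ) ∪ f '' ↑(P.erase σ)) = T \ (↑P ∪ f '' ↑P) := by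
  rw [Set.sdiff_sdiff]
  congr 1
  conv_rhs => rw [← Finset.insert_erase hσ, Finset.coe_insert, Set.image_insert_eq]
  grind

lemma isGreatest_insert_of_le {α : Type*} [Preorder α] {s : Set α} {m x : α}
    (hs : IsGreatest s m) (hx : x ≤ m) : IsGreatest (insert x s) m :=
  ⟨Or.inr hs.1, by rintro y (rfl | hy); exacts [hx, hs.2 hy]⟩

lemma isGreatest_erase {α : Type*} [Preorder α] [DecidableEq α] {s : Finset α} {m x : α}
    (hs : IsGreatest (s : Set α) m) (hx : x ≠ m) : IsGreatest (↑(s.erase x) : Set α) m :=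
  ⟨Finset.mem_erase.mpr ⟨hx.symm, hs.1⟩, fun _ hy => hs.2 (Finset.mem_of_mem_erase hy)⟩

theorem reflTransGen_elemCollapse_of_matching {X : Type} (T P : Set (Finset X)) (hP : P.Finite)
    (f : Finset X → Finset X)
    (hf : ∀ σ ∈ P, σ ∈ T ∧ f σ ∈ T ∧ σ ⊂ f σ ∧ f σ ∉ P) (hinj : Set.InjOn f P)
    (hcover : ∀ σ ∈ P, ∀ τ ∈ T, σ ⊂ τ → τ = f σ ∨ ∃ ρ ∈ P, σ ⊂ ρ ∧ (τ = ρ ∨ τ = f ρ)) :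
    ReflTransGen ElemCollapse T (T \ (P ∪ f '' P)) := by
  classical
  obtain ⟨P, rfl⟩ := hP.exists_finset_coe
  clear hP
  induction P using Finset.strongInduction generalizing T with
  | H P ih =>
  rcases P.eq_empty_or_nonempty with rfl | hne
  · simpa using ReflTransGen.refl
  -- The pair on an inclusion-maximal lower face is free, and removing it keeps the hypotheses.
  obtain ⟨σ, hσP, hσmax⟩ := P.exists_maximal hne
  obtain ⟨hσT, hfσT, hσfσ, hfσP⟩ := hf σ hσP
  have hfree : ∀ τ ∈ T, σ ⊂ τ → τ = f σ := by
    intro τ hτ hστ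
    refine (hcover σ hσP τ hτ hστ).resolve_right ?_
    rintro ⟨ρ, hρP, hσρ, -⟩
    exact hσρ.not_subset (hσmax hρP hσρ.subset)
  have hstep : ElemCollapse T (T \ {σ, f σ}) := ⟨σ, f σ, hσT, hfσT, hσfσ, hfree, rfl⟩
  set P' : Set (Finset X) := ↑(P.erase σ)
  have hremaining := sdiff_pair_sdiff_erase_union_image T f hσP
  have hf' : ∀ ρ ∈ P', ρ ∈ T \ {σ, f σ} ∧ f ρ ∈ T \ {σ, f σ} ∧ ρ ⊂ f ρ ∧ f ρ ∉ P' := by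
    intro ρ hρ
    obtain ⟨hρσ, hρP⟩ := Finset.mem_erase.mp hρ
    obtain ⟨hρT, hfρT, hρfρ, hfρP⟩ := hf ρ hρP
    refine ⟨⟨hρT, ?_⟩, ⟨hfρT, ?_⟩, hρfρ, fun h => hfρP (Finset.mem_of_mem_erase h)⟩
    · rintro (h | h)
      · exact hρσ h
      · exact hfσP (h ▸ hρP)
    · rintro (h | h)
      · exact hfρP (h ▸ hσP)
      · exact hρσ (hinj hρP hσP h)
  have hcover' : ∀ ρ ∈ P', ∀ τ ∈ T \ {σ, f σ}, ρ ⊂ τ →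
      τ = f ρ ∨ ∃ ρ' ∈ P', ρ ⊂ ρ' ∧ (τ = ρ' ∨ τ = f ρ') := by
    rintro ρ hρ τ ⟨hτT, hτσ⟩ hρτ
    refine (hcover ρ (Finset.mem_of_mem_erase hρ) τ hτT hρτ).imp_right ?_
    rintro ⟨ρ', hρ'P, hρρ', hτρ'⟩
    refine ⟨ρ', Finset.mem_erase.mpr ⟨?_, hρ'P⟩, hρρ', hτρ'⟩
    rintro rfl
    exact hτσ hτρ'
  have hrest := ih (P.erase σ) (P.erase_ssubset hσP) _ hf' (hinj.mono (P.erase_subset σ)) hcover'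
  exact .head hstep (hremaining ▸ hrest)

section KComplex

variable {X : Type} [PartialOrder X]

def kComplex (r : X → X → Prop) : Set (Finset X) :=
  {s | s.Nonempty ∧ ∃ y, ∀ x ∈ s, r x y}

lemma kComplex_lt_subset_le : kComplex (X := X) (· < ·) ⊆ kComplex (· ≤ ·) :=
  fun _ ⟨hne, y, hy⟩ => ⟨hne, y, fun x hx => (hy x hx).le⟩

lemma mem_kComplex_le_of_isGreatest {s : Finset X} {m : X} (h : IsGreatest (s : Set X) m) :
    s ∈ kComplex (· ≤ ·) :=
  ⟨⟨m, h.1⟩, m, h.2⟩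

lemma isGreatest_of_mem_kComplex_le {s : Finset X} {m : X} (hs : s ∈ kComplex (· ≤ ·))
    (hm : IsMax m) (hms : m ∈ s) : IsGreatest (s : Set X) m := by
  obtain ⟨-, y, hy⟩ := hs
  obtain rfl : m = y := le_antisymm (hy m hms) (hm (hy m hms))
  exact ⟨hms, hy⟩

lemma mem_kComplex_le_sdiff_lt {s : Finset X} :
    s ∈ kComplex (· ≤ ·) \ kComplex (· < ·) ↔ ∃ m, IsMax m ∧ IsGreatest (s : Set X) m := by
  constructor
  · rintro ⟨⟨hne, y, hy⟩, hlt⟩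
    have hys : y ∈ s := by
      by_contra hys
      exact hlt ⟨hne, y, fun x hx => (hy x hx).lt_of_ne (ne_of_mem_of_not_mem hx hys)⟩
    refine ⟨y, fun b hyb => ?_, hys, hy⟩
    by_contra hby
    exact hlt ⟨hne, b, fun x hx => (hy x hx).trans_lt (hyb.lt_of_not_ge hby)⟩
  · rintro ⟨m, hm, hs⟩
    refine ⟨mem_kComplex_le_of_isGreatest hs, fun ⟨_, y, hy⟩ => ?_⟩
    exact (hy m hs.1).not_ge (hm (hy m hs.1).le)

end KComplex

section FreeFaces

variable {X : Type} [PartialOrder X] [DecidableEq X] (a : X → X)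

def freeFaces : Set (Finset X) :=
  {σ | ∃ m, IsMax m ∧ IsGreatest (σ : Set X) m ∧ a m ∉ σ}

-- On a face whose greatest element `m` is maximal this is `insert (a m) σ`; the filter avoids
-- having to select `m`.
open Classical in
noncomputable def addBelowMax (σ : Finset X) : Finset X :=
  σ ∪ {x ∈ σ | IsMax x}.image a

variable {a}

lemma addBelowMax_of_isGreatest {σ : Finset X} {m : X} (hm : IsMax m)
    (hσ : IsGreatest (σ : Set X) m) : addBelowMax a σ = insert (a m) σ := by
  classical
  have hmax : {x ∈ σ | IsMax x} = {m} := by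
    ext x
    simp only [Finset.mem_filter, Finset.mem_singleton]
    refine ⟨fun ⟨hx, hxmax⟩ => le_antisymm (hσ.2 hx) (hxmax (hσ.2 hx)), ?_⟩
    rintro rfl
    exact ⟨hσ.1, hm⟩
  rw [addBelowMax, hmax, Finset.image_singleton, Finset.union_comm, ← Finset.insert_eq]

variable (ha : ∀ m, IsMax m → a m < m)
include ha

lemma isGreatest_insert_below {s : Finset X} {m : X} (hm : IsMax m)
    (hs : IsGreatest (s : Set X) m) : IsGreatest (↑(insert (a m) s) : Set X) m := by
  rw [Finset.coe_insert]
  exact isGreatest_insert_of_le hs (ha m hm).le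

lemma erase_mem_freeFaces {s : Finset X} {m : X} (hm : IsMax m)
    (hs : IsGreatest (s : Set X) m) : s.erase (a m) ∈ freeFaces a :=
  ⟨m, hm, isGreatest_erase hs (ha m hm).ne, Finset.notMem_erase _ _⟩

lemma addBelowMax_erase {s : Finset X} {m : X} (hm : IsMax m) (hs : IsGreatest (s : Set X) m)
    (has : a m ∈ s) : addBelowMax a (s.erase (a m)) = s := by
  rw [addBelowMax_of_isGreatest hm (isGreatest_erase hs (ha m hm).ne), Finset.insert_erase has]

lemma freeFaces_union_image_addBelowMax :
    freeFaces a ∪ addBelowMax a '' freeFaces a = kComplex (· ≤ ·) \ kComplex (· < ·) := by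
  ext s
  rw [mem_kComplex_le_sdiff_lt]
  constructor
  · rintro (⟨m, hm, hs, -⟩ | ⟨σ, ⟨m, hm, hσ, -⟩, rfl⟩)
    · exact ⟨m, hm, hs⟩
    · rw [addBelowMax_of_isGreatest hm hσ]
      exact ⟨m, hm, isGreatest_insert_below ha hm hσ⟩
  · rintro ⟨m, hm, hs⟩
    by_cases has : a m ∈ s
    · refine Or.inr ⟨s.erase (a m), erase_mem_freeFaces ha hm hs, ?_⟩
      exact addBelowMax_erase ha hm hs has
    · exact Or.inl ⟨m, hm, hs, has⟩

lemma addBelowMax_spec {σ : Finset X} (hσ : σ ∈ freeFaces a) :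
    σ ∈ kComplex (· ≤ ·) ∧ addBelowMax a σ ∈ kComplex (· ≤ ·) ∧ σ ⊂ addBelowMax a σ ∧
      addBelowMax a σ ∉ freeFaces a := by
  obtain ⟨m, hm, hσm, haσ⟩ := hσ
  have hτm := isGreatest_insert_below ha hm hσm
  rw [addBelowMax_of_isGreatest hm hσm]
  refine ⟨mem_kComplex_le_of_isGreatest hσm, mem_kComplex_le_of_isGreatest hτm,
    Finset.ssubset_insert haσ, ?_⟩
  rintro ⟨m', -, hτm', ham'⟩
  obtain rfl := hτm.unique hτm'
  exact ham' (Finset.mem_insert_self _ _)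

lemma injOn_addBelowMax : Set.InjOn (addBelowMax a) (freeFaces a) := by
  rintro σ ⟨m, hm, hσ, haσ⟩ τ ⟨n, hn, hτ, haτ⟩ h
  rw [addBelowMax_of_isGreatest hm hσ, addBelowMax_of_isGreatest hn hτ] at h
  obtain rfl : m = n :=
    (isGreatest_insert_below ha hm hσ).unique (h ▸ isGreatest_insert_below ha hn hτ)
  rw [← Finset.erase_insert haσ, h, Finset.erase_insert haτ]

lemma eq_addBelowMax_or_exists_of_ssubset {σ τ : Finset X} (hσ : σ ∈ freeFaces a)
    (hτ : τ ∈ kComplex (· ≤ ·)) (hστ : σ ⊂ τ) :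
    τ = addBelowMax a σ ∨ ∃ ρ ∈ freeFaces a, σ ⊂ ρ ∧ (τ = ρ ∨ τ = addBelowMax a ρ) := by
  obtain ⟨m, hm, hσm, haσ⟩ := hσ
  have hτm := isGreatest_of_mem_kComplex_le hτ hm (hστ.subset hσm.1)
  by_cases haτ : a m ∈ τ
  · have hρ := (addBelowMax_erase ha hm hτm haτ).symm
    rcases (Finset.subset_erase.mpr ⟨hστ.subset, haσ⟩).eq_or_ssubset with rfl | hσρ
    · exact Or.inl hρ
    · exact Or.inr ⟨_, erase_mem_freeFaces ha hm hτm, hσρ, Or.inr hρ⟩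
  · exact Or.inr ⟨τ, ⟨m, hm, hτm, haτ⟩, hστ, Or.inl rfl⟩

end FreeFaces

theorem kComplex_le_collapses_to_kComplex_lt {X : Type} [PartialOrder X] [Finite X]
    (h : ∀ m : X, IsMax m → ∃ y, y < m) :
    ReflTransGen ElemCollapse (kComplex (X := X) (· ≤ ·)) (kComplex (· < ·)) := by
  classical
  choose! a ha using h
  have hcollapse := reflTransGen_elemCollapse_of_matching _ _ (Set.toFinite (freeFaces a))
    (addBelowMax a) (fun _ => addBelowMax_spec ha) (injOn_addBelowMax ha)
    (fun _ hσ _ hτ => eq_addBelowMax_or_exists_of_ssubset ha hσ hτ)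
  rwa [freeFaces_union_image_addBelowMax ha,
    Set.sdiff_sdiff_cancel_left kComplex_lt_subset_le] at hcollapse

/-- Let `(X, ≤)` be a finite poset in which no connected component is a single
point (every `x` is comparable with some `y ≠ x`). Then the K-complex of `≤` collapses to the
K-complex of `<` (a finite sequence of elementary collapses). -/
theorem stmt_15 {X : Type} [Fintype X] [PartialOrder X]
    (h : ∀ x : X, ∃ y : X, y ≠ x ∧ (x ≤ y ∨ y ≤ x)) :
    Relation.ReflTransGen (ElemCollapse (X := X))
      {s : Finset X | s.Nonempty ∧ ∃ y : X, ∀ x ∈ s, x ≤ y}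
      {s : Finset X | s.Nonempty ∧ ∃ y : X, ∀ x ∈ s, x < y} := by
  refine kComplex_le_collapses_to_kComplex_lt fun m hm => ?_
  obtain ⟨y, hym, hmy | hym'⟩ := h m
  · exact absurd (hm.eq_of_le hmy).symm hym
  · exact ⟨y, hym'.lt_of_ne hym⟩
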